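/- Lower-bound combination lemma: Let D be a good drawing of K_n, n ≥ 4, and suppose every vertex of D is lucky, i.e., t(v) − l(v) ≥ 2 for all v, and that for all m with 4 ≤ m < n every good drawing of K_m in which every vertex is lucky has at least 2m − 4 empty triangles. If the drawing obtained by deleting any vertex of D again has all vertices lucky, then D has at least 2n − 4 empty triangles. -/
import Mathlib


open Set Topology

/-- A good drawing of the complete graph `K_n` in the plane: vertices are distinct
points, each edge `uv` is a Jordan arc (continuous injective curve) from `u` to `v`,
edges avoid the other vertices, and any two distinct edges intersect in at most one
point (a proper crossing or a common endpoint). -/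
structure GoodDrawing (n : ℕ) where
  vtx : Fin n → ℝ × ℝ
  vtx_inj : Function.Injective vtx
  arc : Fin n → Fin n → ℝ → ℝ × ℝ
  arc_symm : ∀ u v t, arc u v t = arc v u (1 - t)
  arc_cont : ∀ u v, u ≠ v → ContinuousOn (arc u v) (Set.Icc 0 1)
  arc_injOn : ∀ u v, u ≠ v → Set.InjOn (arc u v) (Set.Icc 0 1)
  arc_src : ∀ u v, arc u v 0 = vtx u
  arc_avoid : ∀ u v w, u ≠ v → vtx w ∈ arc u v '' Set.Icc 0 1 → w = u ∨ w = v
  good : ∀ u v x y, u ≠ v → x ≠ y → ({u, v} : Set (Fin n)) ≠ {x, y} →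
    ((arc u v '' Set.Icc 0 1) ∩ (arc x y '' Set.Icc 0 1)).Subsingleton

namespace GoodDrawing

variable {n : ℕ}

/-- The set of points of the drawn edge `uv`. -/
def arcSet (D : GoodDrawing n) (u v : Fin n) : Set (ℝ × ℝ) := D.arc u v '' Set.Icc 0 1

/-- The Jordan curve (as a point set) formed by the triangle `uvw`. -/
def triSet (D : GoodDrawing n) (u v w : Fin n) : Set (ℝ × ℝ) :=
  D.arcSet u v ∪ D.arcSet v w ∪ D.arcSet w u

/-- Edges `uv` and `xy` cross: they share a point which is not a drawn vertex. -/
def Crosses (D : GoodDrawing n) (u v x y : Fin n) : Prop :=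
  ∃ p, p ∈ D.arcSet u v ∧ p ∈ D.arcSet x y ∧ p ∉ Set.range D.vtx

/-- Three pairwise distinct vertices. -/
def IsTri (u v w : Fin n) : Prop := u ≠ v ∧ v ≠ w ∧ u ≠ w

/-- The triangle `uvw` is empty: some connected component of the complement of its
Jordan curve contains none of the remaining vertices. -/
def EmptyTri (D : GoodDrawing n) (u v w : Fin n) : Prop :=
  IsTri u v w ∧ ∃ p ∉ D.triSet u v w,
    ∀ x : Fin n, x ∉ ({u, v, w} : Set (Fin n)) →
      D.vtx x ∉ connectedComponentIn (D.triSet u v w)ᶜ p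

/-- The triangle `uvw` is interior-empty: no remaining vertex lies in a bounded
component of the complement of its Jordan curve. -/
def InteriorEmptyTri (D : GoodDrawing n) (u v w : Fin n) : Prop :=
  IsTri u v w ∧ ∀ x : Fin n, x ∉ ({u, v, w} : Set (Fin n)) →
    ¬ Bornology.IsBounded (connectedComponentIn (D.triSet u v w)ᶜ (D.vtx x))

/-- `uvw` is a star triangle at `v`: its side `uw` is crossed by no edge incident
to `v`. -/
def StarTriAt (D : GoodDrawing n) (v u w : Fin n) : Prop :=
  IsTri u v w ∧ ∀ x : Fin n, x ≠ v → ¬ D.Crosses u w v x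

/-- `v` is lonely in the triangle `v₁v₂v₃`: `v` is the only vertex drawn in one of
the two connected components of the complement of the triangle. -/
def LonelyIn (D : GoodDrawing n) (v v₁ v₂ v₃ : Fin n) : Prop :=
  IsTri v₁ v₂ v₃ ∧ v ∉ ({v₁, v₂, v₃} : Set (Fin n)) ∧
    ∀ x : Fin n, x ∉ ({v, v₁, v₂, v₃} : Set (Fin n)) →
      D.vtx x ∉ connectedComponentIn (D.triSet v₁ v₂ v₃)ᶜ (D.vtx v)

/-- `v` is lonely in some triangle of the drawing. -/
def Lonely (D : GoodDrawing n) (v : Fin n) : Prop := ∃ a b c, D.LonelyIn v a b c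

/-- The number of empty triangles of the drawing (as unordered triples). -/
noncomputable def emptyTriCount (D : GoodDrawing n) : ℕ :=
  Set.ncard {s : Finset (Fin n) | ∃ u v w, s = {u, v, w} ∧ D.EmptyTri u v w}

/-- `t v`: the number of empty triangles incident to `v`. -/
noncomputable def t (D : GoodDrawing n) (v : Fin n) : ℕ :=
  Set.ncard {s : Finset (Fin n) | v ∈ s ∧ ∃ a b c, s = {a, b, c} ∧ D.EmptyTri a b c}

/-- `l v`: the number of triangles in which `v` is lonely. -/
noncomputable def l (D : GoodDrawing n) (v : Fin n) : ℕ :=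
  Set.ncard {s : Finset (Fin n) | ∃ a b c, s = {a, b, c} ∧ D.LonelyIn v a b c}

/-- `v` is lucky: `t v - l v ≥ 2`. -/
def Lucky (D : GoodDrawing n) (v : Fin n) : Prop := D.l v + 2 ≤ D.t v

/-- The number of empty star triangles at `v`. -/
noncomputable def starEmptyCountAt (D : GoodDrawing n) (v : Fin n) : ℕ :=
  Set.ncard {s : Finset (Fin n) |
    ∃ u w, s = {u, v, w} ∧ D.StarTriAt v u w ∧ D.EmptyTri u v w}

end GoodDrawing

namespace GoodDrawing

/-- The good drawing of `K_n` obtained by deleting the vertex `v` (and its incident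
edges) from a good drawing of `K_{n+1}`. -/
def delete {n : ℕ} (D : GoodDrawing (n + 1)) (v : Fin (n + 1)) : GoodDrawing n where
  vtx i := D.vtx (v.succAbove i)
  vtx_inj := D.vtx_inj.comp Fin.succAbove_right_injective
  arc i j := D.arc (v.succAbove i) (v.succAbove j)
  arc_symm i j t := D.arc_symm _ _ t
  arc_cont i j h := D.arc_cont _ _ (Fin.succAbove_right_injective.ne h)
  arc_injOn i j h := D.arc_injOn _ _ (Fin.succAbove_right_injective.ne h)
  arc_src i j := D.arc_src _ _
  arc_avoid i j k h hk := by
    rcases D.arc_avoid _ _ _ (Fin.succAbove_right_injective.ne h) hk with h' | h'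
    · exact Or.inl (Fin.succAbove_right_injective h')
    · exact Or.inr (Fin.succAbove_right_injective h')
  good u w x y huw hxy hne := by
    refine D.good _ _ _ _ (Fin.succAbove_right_injective.ne huw)
      (Fin.succAbove_right_injective.ne hxy) ?_
    intro hEq
    apply hne
    have h1 : v.succAbove '' ({u, w} : Set (Fin n)) =
        v.succAbove '' ({x, y} : Set (Fin n)) := by
      simpa [Set.image_insert_eq, Set.image_singleton] using hEq
    exact (Set.image_injective.mpr Fin.succAbove_right_injective) h1

end GoodDrawing

namespace GoodDrawing

lemma t_le_one_of_three (E : GoodDrawing 3) (w : Fin 3) : E.t w ≤ 1 := by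
  have hsub : {s : Finset (Fin 3) | w ∈ s ∧ ∃ a b c, s = {a, b, c} ∧ E.EmptyTri a b c}
      ⊆ {(Finset.univ : Finset (Fin 3))} := by
    rintro s ⟨hw, a, b, c, rfl, ⟨hab, hbc, hac⟩, -⟩
    have hcard : ({a, b, c} : Finset (Fin 3)).card = 3 :=
      Finset.card_eq_three.mpr ⟨a, b, c, hab, hac, hbc, rfl⟩
    have : ({a, b, c} : Finset (Fin 3)) = Finset.univ :=
      Finset.eq_univ_of_card _ (by simpa using hcard)
    simp [this]
  calc E.t w ≤ ({(Finset.univ : Finset (Fin 3))} : Set (Finset (Fin 3))).ncard :=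
        Set.ncard_le_ncard hsub (Set.finite_singleton _)
    _ = 1 := Set.ncard_singleton _

/-- Deleting a vertex `v` destroys the `t v` empty triangles at `v` and creates at
most `l v` new ones. -/
lemma delete_count_le {n : ℕ} (D : GoodDrawing (n + 1)) (v : Fin (n + 1)) :
    (D.delete v).emptyTriCount + D.t v ≤ D.emptyTriCount + D.l v := by
  classical
  set emb : Fin n ↪ Fin (n + 1) := ⟨v.succAbove, Fin.succAbove_right_injective⟩ with hemb
  set Sdel : Set (Finset (Fin n)) :=
    {s | ∃ a b c, s = {a, b, c} ∧ (D.delete v).EmptyTri a b c} with hSdel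
  set A : Set (Finset (Fin (n + 1))) :=
    {s | v ∉ s ∧ ∃ a b c, s = {a, b, c} ∧ D.EmptyTri a b c} with hA
  set B : Set (Finset (Fin (n + 1))) :=
    {s | ∃ a b c, s = {a, b, c} ∧ D.LonelyIn v a b c} with hB
  set Tv : Set (Finset (Fin (n + 1))) :=
    {s | v ∈ s ∧ ∃ a b c, s = {a, b, c} ∧ D.EmptyTri a b c} with hTv
  -- the image of `Sdel` is contained in `A ∪ B`
  have himg : (fun s => s.map emb) '' Sdel ⊆ A ∪ B := by
    rintro - ⟨s, ⟨a, b, c, rfl, ⟨⟨hab, hbc, hac⟩, p, hp, hall⟩⟩, rfl⟩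
    set A' := v.succAbove a
    set B' := v.succAbove b
    set C' := v.succAbove c
    have hmap : ({a, b, c} : Finset (Fin n)).map emb = {A', B', C'} := by
      simp [hemb, A', B', C', Finset.map_insert]
    have htriset : (D.delete v).triSet a b c = D.triSet A' B' C' := rfl
    have htri : IsTri A' B' C' :=
      ⟨Fin.succAbove_right_injective.ne hab, Fin.succAbove_right_injective.ne hbc,
        Fin.succAbove_right_injective.ne hac⟩
    have hvne : ∀ i : Fin n, v ≠ v.succAbove i := fun i => (Fin.succAbove_ne v i).symm
    rw [htriset] at hp hall
    by_cases hv : D.vtx v ∈ connectedComponentIn (D.triSet A' B' C')ᶜ p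
    · -- `v` is lonely in `A'B'C'`
      right
      refine ⟨A', B', C', hmap, htri, ?_, ?_⟩
      · simp only [Set.mem_insert_iff, Set.mem_singleton_iff]
        push_neg
        exact ⟨hvne a, hvne b, hvne c⟩
      · intro x hx
        have hxv : x ≠ v := by
          intro h; apply hx; simp [h]
        obtain ⟨x', rfl⟩ := Fin.exists_succAbove_eq hxv
        have hx' : x' ∉ ({a, b, c} : Set (Fin n)) := by
          intro h
          apply hx
          simp only [Set.mem_insert_iff, Set.mem_singleton_iff] at h
          rcases h with rfl | rfl | rfl <;> simp [A', B', C']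
        have heq : connectedComponentIn (D.triSet A' B' C')ᶜ (D.vtx v)
            = connectedComponentIn (D.triSet A' B' C')ᶜ p :=
          (connectedComponentIn_eq hv).symm
        rw [heq]
        exact hall x' hx'
    · -- the triangle was already empty in `D`
      left
      refine ⟨?_, A', B', C', hmap, htri, p, hp, ?_⟩
      · show v ∉ Finset.map emb {a, b, c}
        rw [hmap]
        simp only [Finset.mem_insert, Finset.mem_singleton]
        push_neg
        exact ⟨hvne a, hvne b, hvne c⟩
      · intro x hx
        by_cases hxv : x = v
        · rwa [hxv]
        · obtain ⟨x', rfl⟩ := Fin.exists_succAbove_eq hxv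
          have hx' : x' ∉ ({a, b, c} : Set (Fin n)) := by
            intro h
            apply hx
            simp only [Set.mem_insert_iff, Set.mem_singleton_iff] at h
            rcases h with rfl | rfl | rfl <;> simp [A', B', C']
          exact hall x' hx'
  -- counting
  have hinj : Function.Injective (fun s : Finset (Fin n) => s.map emb) :=
    fun s t h => Finset.map_injective emb h
  have h1 : (D.delete v).emptyTriCount = Sdel.ncard := rfl
  have h2 : ((fun s => s.map emb) '' Sdel).ncard = Sdel.ncard :=
    Set.ncard_image_of_injective _ hinj
  have h3 : Sdel.ncard ≤ A.ncard + B.ncard := by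
    calc Sdel.ncard = ((fun s => s.map emb) '' Sdel).ncard := h2.symm
      _ ≤ (A ∪ B).ncard := Set.ncard_le_ncard himg (Set.toFinite _)
      _ ≤ A.ncard + B.ncard := Set.ncard_union_le _ _
  have hB : B.ncard = D.l v := rfl
  have hsplit : A.ncard + Tv.ncard = D.emptyTriCount := by
    rw [← Set.ncard_union_eq ?_ (Set.toFinite _) (Set.toFinite _)]
    · congr 1
      ext s
      simp only [hA, hTv, Set.mem_union, Set.mem_setOf_eq]
      constructor
      · rintro (⟨-, h⟩ | ⟨-, h⟩) <;> exact h
      · intro h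
        by_cases hv : v ∈ s
        · exact Or.inr ⟨hv, h⟩
        · exact Or.inl ⟨hv, h⟩
    · rw [Set.disjoint_left]
      rintro s ⟨hs, -⟩ ⟨hs', -⟩
      exact hs hs'
  have hTveq : Tv.ncard = D.t v := rfl
  rw [h1, ← hsplit, hTveq.symm, hB.symm]
  omega

end GoodDrawing

/-- Lower-bound combination lemma. Let `D` be a good drawing of `K_n`,
`n ≥ 4`, in which every vertex is lucky, suppose that every good drawing of `K_m`
with `4 ≤ m < n` in which every vertex is lucky has at least `2m - 4` empty
triangles, and suppose that after deleting any vertex of `D` all vertices of the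
resulting drawing are again lucky. Then `D` has at least `2n - 4` empty triangles. -/
theorem lucky_lower_bound {n : ℕ} (hn : 4 ≤ n + 1) (D : GoodDrawing (n + 1))
    (hlucky : ∀ v, D.Lucky v)
    (IH : ∀ m : ℕ, 4 ≤ m → m < n + 1 → ∀ E : GoodDrawing m,
      (∀ w, E.Lucky w) → 2 * m - 4 ≤ E.emptyTriCount)
    (hdel : ∀ v : Fin (n + 1), ∀ w : Fin n, (D.delete v).Lucky w) :
    2 * (n + 1) - 4 ≤ D.emptyTriCount := by
  have hn3 : 3 ≤ n := by omega
  rcases eq_or_lt_of_le hn3 with h3 | h4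
  · -- n = 3 : `hdel` is contradictory since in a drawing of `K_3` no vertex is lucky
    exfalso
    subst h3
    have hL := hdel 0 0
    have ht := GoodDrawing.t_le_one_of_three (D.delete 0) 0
    have := hL
    unfold GoodDrawing.Lucky at this
    omega
  · -- n ≥ 4 : apply IH to the drawing with vertex `0` deleted
    have hIH := IH n (by omega) (by omega) (D.delete 0) (hdel 0)
    have hcnt := D.delete_count_le 0
    have hluck := hlucky 0
    unfold GoodDrawing.Lucky at hluck
    omega
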